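/- arXiv:2212.02264 — 5 statements merged into one kernel-verified Lean document; each statement's English description precedes it below -/
import Mathlib

section
/- Let F = (𝒞_0,𝒞_1,…,𝒞_N) be a family of buckets with probability distribution P such that (F,P) is 1/6-representative. Then for every τ ≥ 0: Pr_{S∼D_c^m}[L^{1/3}_D(g_S) > 24·τ] ≤ 23·max_{1≤i≤N} Pr_{S∼D_c^m}[L^{5/6}_D(g_{S(𝒞_i)}) > τ]. -/
/-!
Representativeness makes `g_S` the `P`-mixture `P(0)·g_{S(𝒞_0)} + ∑ᵢ P(i)·g_{S(𝒞_i)}` of the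
bucket voters, all with values in `[-1, 1]`. If `g_S` has margin at most `1/3` at `x`, then, since
`P(0) ≤ 1/6`, buckets of total weight at least `7/66` have margin at most `5/6` at `x`. Averaging
over `x` (a Markov argument), when `L^{1/3}(g_S) > 24τ` the buckets with `L^{5/6} > τ` carry weight
more than `7/66 - 1/24 > 1/23`. Averaging once more, now over `S`, gives
`Pr[L^{1/3}(g_S) > 24τ] / 23 ≤ ∑ᵢ P(i) · Pr[L^{5/6}(g_{S(𝒞_i)}) > τ]`, and the right-hand side is
at most the maximum over `i` since `∑ᵢ P(i) ≤ 1`.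
-/

open MeasureTheory Finset
open scoped ENNReal

noncomputable section

/-- A hypothesis takes values in `{-1, 1}`. -/
def PM1 {X : Type} (h : X → ℝ) : Prop := ∀ x, h x = 1 ∨ h x = -1

/-- The concept class `C` shatters some `k` points: every sign pattern is realized. -/
def Shatters {X : Type} (C : Set (X → ℝ)) (k : ℕ) : Prop :=
  ∃ xs : Fin k → X, ∀ σ : Fin k → Bool, ∃ h ∈ C, ∀ i, h (xs i) = (if σ i then 1 else -1)

/-- `d` is the VC dimension of `C`: the largest size of a shattered set. -/
def VCdim {X : Type} (C : Set (X → ℝ)) (d : ℕ) : Prop :=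
  Shatters C d ∧ ¬ Shatters C (d + 1)

/-- An ERM rule for the target concept `c`: on any sample labeled by `c` it outputs a
member of `C` consistent with the sample. -/
def IsERM {X : Type} {n : ℕ} (C : Set (X → ℝ)) (c : X → ℝ)
    (ERM : (Fin n → X) → (X → ℝ)) : Prop :=
  ∀ s : Fin n → X, ERM s ∈ C ∧ ∀ k, ERM s (s k) = c (s k)

/-- The bagged voting classifier `f_{S,B}`. -/
def bagF {X : Type} {m n t : ℕ} (ERM : (Fin n → X) → (X → ℝ))
    (S : Fin m → X) (B : Fin t → (Fin n → Fin m)) (x : X) : ℝ :=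
  (t : ℝ)⁻¹ * ∑ i : Fin t, ERM (S ∘ B i) x

/-- Margin loss `L^γ_D(f) = Pr_{x∼D}[f(x)·c(x) ≤ γ]`, as a real number. -/
def marginLoss {X : Type} [MeasurableSpace X] (D : Measure X) (c : X → ℝ)
    (f : X → ℝ) (γ : ℝ) : ℝ :=
  (D {x | f x * c x ≤ γ}).toReal

/-- Uniform probability measure on a finite type. -/
def unif (α : Type) [Fintype α] [MeasurableSpace α] : Measure α :=
  (Fintype.card α : ℝ≥0∞)⁻¹ • Measure.count


/-- The average voting classifier `g_S` over all `m^n` bootstrap samples. -/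
def gAvg {X : Type} {m n : ℕ} (ERM : (Fin n → X) → (X → ℝ)) (S : Fin m → X) (x : X) : ℝ :=
  ((m : ℝ) ^ n)⁻¹ * ∑ I : Fin n → Fin m, ERM (S ∘ I) x

/-- The voting classifier `g_{S(𝒞)}` averaging over the bootstrap samples of a bucket. -/
def gBucket {X : Type} {m n : ℕ} (ERM : (Fin n → X) → (X → ℝ)) (S : Fin m → X)
    (𝒞 : Finset (Fin n → Fin m)) (x : X) : ℝ :=
  ((𝒞.card : ℝ))⁻¹ * ∑ I ∈ 𝒞, ERM (S ∘ I) x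

/-- `(F, P)` with `F = (𝒞_0, 𝒞_1, …, 𝒞_N)` (given as `C0` and `Cb`) and
`P = (P0, Pb)` is an `ε`-representative pair: buckets are nonempty, `P` is a probability
distribution, drawing a bucket by `P` and then a uniform element of it yields the
uniform distribution on `[m]^n`, and `P(0) ≤ ε`. -/
def Representative {m n N : ℕ} (C0 : Finset (Fin n → Fin m))
    (Cb : Fin N → Finset (Fin n → Fin m)) (P0 : ℝ) (Pb : Fin N → ℝ) (ε : ℝ) : Prop :=
  C0.Nonempty ∧ (∀ i, (Cb i).Nonempty) ∧ 0 ≤ P0 ∧ (∀ i, 0 ≤ Pb i) ∧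
  P0 + ∑ i, Pb i = 1 ∧
  (∀ I : Fin n → Fin m,
    P0 * (if I ∈ C0 then ((C0.card : ℝ))⁻¹ else 0)
      + ∑ i, Pb i * (if I ∈ Cb i then (((Cb i).card : ℝ))⁻¹ else 0)
      = ((m : ℝ) ^ n)⁻¹) ∧
  P0 ≤ ε


open scoped Classical

section Averaging

variable {α ι : Type*} [MeasurableSpace α] (μ : Measure α) (s : Finset ι) (Q : ι → Set α)
  {A : Set α}

theorem mul_measure_le_sum_mul_measure_inter (w : ι → ℝ≥0∞) {a : ℝ≥0∞}
    (hA : ∀ x ∈ A, a ≤ ∑ i ∈ s with x ∈ Q i, w i) :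
    a * μ A ≤ ∑ i ∈ s, w i * μ (Q i ∩ A) := by
  -- `Q i ∩ A` need not be measurable; its measurable hull has the same measure.
  set T : ι → Set α := fun i => toMeasurable μ (Q i ∩ A)
  have hT (i : ι) : MeasurableSet (T i) := measurableSet_toMeasurable _ _
  let f : α → ℝ≥0∞ := fun x => ∑ i ∈ s, (T i).indicator (fun _ => w i) x
  have hA_sub : A ⊆ {x | a ≤ f x} := fun x hx =>
    calc a ≤ ∑ i ∈ s with x ∈ Q i, w i := hA x hx
      _ = ∑ i ∈ s with x ∈ Q i, (T i).indicator (fun _ => w i) x :=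
        Finset.sum_congr rfl fun i hi => (Set.indicator_of_mem
          (subset_toMeasurable μ _ (Set.mem_inter (mem_filter.mp hi).2 hx)) (fun _ => w i)).symm
      _ ≤ f x := Finset.sum_le_sum_of_subset (Finset.filter_subset _ _)
  have hf : Measurable f := Finset.measurable_sum _ fun i _ => measurable_const.indicator (hT i)
  calc a * μ A ≤ a * μ {x | a ≤ f x} := by gcongr
    _ ≤ ∫⁻ x, f x ∂μ := mul_meas_ge_le_lintegral₀ hf.aemeasurable a
    _ = ∑ i ∈ s, w i * μ (Q i ∩ A) := by
      rw [lintegral_finsetSum _ fun i _ => measurable_const.indicator (hT i)]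
      refine Finset.sum_congr rfl fun i _ => ?_
      rw [lintegral_indicator (hT i), setLIntegral_const, measure_toMeasurable]

variable [IsFiniteMeasure μ] {w : ι → ℝ}

theorem mul_measureReal_le_sum_mul_measureReal_inter (hw : ∀ i ∈ s, 0 ≤ w i) {a : ℝ}
    (hA : ∀ x ∈ A, a ≤ ∑ i ∈ s with x ∈ Q i, w i) :
    a * μ.real A ≤ ∑ i ∈ s, w i * μ.real (Q i ∩ A) := by
  have hw' : ∀ x, ∑ i ∈ s with x ∈ Q i, ENNReal.ofReal (w i)
      = ENNReal.ofReal (∑ i ∈ s with x ∈ Q i, w i) := fun x =>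
    (ENNReal.ofReal_sum_of_nonneg fun i hi => hw i (Finset.mem_filter.mp hi).1).symm
  have key := mul_measure_le_sum_mul_measure_inter μ s Q (fun i => ENNReal.ofReal (w i))
    (a := ENNReal.ofReal a) fun x hx => (hw' x).symm ▸ ENNReal.ofReal_le_ofReal (hA x hx)
  have key_real := ENNReal.toReal_mono
    (ENNReal.sum_ne_top.mpr fun i _ => ENNReal.mul_ne_top ENNReal.ofReal_ne_top
      (measure_ne_top μ _)) key
  rw [ENNReal.toReal_sum fun i _ => ENNReal.mul_ne_top ENNReal.ofReal_ne_top (measure_ne_top μ _),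
    ENNReal.toReal_mul, ENNReal.toReal_ofReal'] at key_real
  calc a * μ.real A ≤ max a 0 * μ.real A := by gcongr; exact le_max_left a 0
    _ ≤ ∑ i ∈ s, (ENNReal.ofReal (w i) * μ (Q i ∩ A)).toReal := key_real
    _ = ∑ i ∈ s, w i * μ.real (Q i ∩ A) := Finset.sum_congr rfl fun i hi => by
      rw [ENNReal.toReal_mul, ENNReal.toReal_ofReal (hw i hi), measureReal_def]

theorem mul_measureReal_le_sum_filter_mul_add (hw : ∀ i ∈ s, 0 ≤ w i)
    (hw_sum : ∑ i ∈ s, w i ≤ 1) {a τ : ℝ} (hτ : 0 ≤ τ)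
    (hA : ∀ x ∈ A, a ≤ ∑ i ∈ s with x ∈ Q i, w i) :
    a * μ.real A ≤ (∑ i ∈ s with τ < μ.real (Q i), w i) * μ.real A + τ := by
  have h_large : ∑ i ∈ s with τ < μ.real (Q i), w i * μ.real (Q i ∩ A)
      ≤ (∑ i ∈ s with τ < μ.real (Q i), w i) * μ.real A := by
    rw [Finset.sum_mul]
    exact Finset.sum_le_sum fun i hi => mul_le_mul_of_nonneg_left
      (measureReal_mono Set.inter_subset_right) (hw i (Finset.mem_filter.mp hi).1)
  have h_small : ∑ i ∈ s with ¬τ < μ.real (Q i), w i * μ.real (Q i ∩ A) ≤ τ :=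
    calc _ ≤ ∑ i ∈ s with ¬τ < μ.real (Q i), w i * τ := by
          refine Finset.sum_le_sum fun i hi => ?_
          obtain ⟨hi, hQ⟩ := Finset.mem_filter.mp hi
          exact mul_le_mul_of_nonneg_left
            ((measureReal_mono Set.inter_subset_left).trans (not_lt.mp hQ)) (hw i hi)
      _ ≤ (∑ i ∈ s, w i) * τ := by
          rw [← Finset.sum_mul]
          exact mul_le_mul_of_nonneg_right (sum_le_sum_of_subset_of_nonneg (filter_subset _ _)
            fun i hi _ => hw i hi) hτ
      _ ≤ τ := mul_le_of_le_one_left hτ hw_sum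
  calc a * μ.real A ≤ ∑ i ∈ s, w i * μ.real (Q i ∩ A) :=
        mul_measureReal_le_sum_mul_measureReal_inter μ s Q hw hA
    _ ≤ _ := by
      rw [← Finset.sum_filter_add_sum_filter_not s fun i => τ < μ.real (Q i)]
      exact add_le_add h_large h_small

end Averaging

theorem le_sum_filter_of_mixture_le {ι : Type*} (s : Finset ι) {p t : ι → ℝ} {p₀ t₀ : ℝ}
    (hp₀ : 0 ≤ p₀) (hp : ∀ i ∈ s, 0 ≤ p i) (ht₀ : -1 ≤ t₀) (ht : ∀ i ∈ s, -1 ≤ t i)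
    (hsum : p₀ + ∑ i ∈ s, p i = 1) (hp₀_le : p₀ ≤ 1 / 6)
    (hmix : p₀ * t₀ + ∑ i ∈ s, p i * t i ≤ 1 / 3) :
    7 / 66 ≤ ∑ i ∈ s with t i ≤ 5 / 6, p i := by
  have h_low : -∑ i ∈ s with t i ≤ 5 / 6, p i ≤ ∑ i ∈ s with t i ≤ 5 / 6, p i * t i := by
    rw [← Finset.sum_neg_distrib]
    refine Finset.sum_le_sum fun i hi => ?_
    have hi := (Finset.mem_filter.mp hi).1
    nlinarith [hp i hi, ht i hi]
  have h_high : (∑ i ∈ s with ¬t i ≤ 5 / 6, p i) * (5 / 6)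
      ≤ ∑ i ∈ s with ¬t i ≤ 5 / 6, p i * t i := by
    rw [Finset.sum_mul]
    refine Finset.sum_le_sum fun i hi => ?_
    obtain ⟨hi, hti⟩ := Finset.mem_filter.mp hi
    exact mul_le_mul_of_nonneg_left (not_le.mp hti).le (hp i hi)
  have h_split_t := sum_filter_add_sum_filter_not s (fun i => t i ≤ 5 / 6) (fun i => p i * t i)
  have h_split_p := sum_filter_add_sum_filter_not s (fun i => t i ≤ 5 / 6) p
  have h₀ : -p₀ ≤ p₀ * t₀ := by nlinarith
  linarith

theorem PM1.abs_le_one {X : Type} {h : X → ℝ} (hh : PM1 h) (x : X) : |h x| ≤ 1 := by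
  rcases hh x with hx | hx <;> simp [hx]

section Voting

variable {X : Type} {m n N : ℕ} {ERM : (Fin n → X) → (X → ℝ)} {c : X → ℝ}
  {C0 : Finset (Fin n → Fin m)} {Cb : Fin N → Finset (Fin n → Fin m)} {P0 : ℝ} {Pb : Fin N → ℝ}

theorem Representative.weight_nonneg {ε : ℝ} (hrep : Representative C0 Cb P0 Pb ε) (i : Fin N) :
    0 ≤ Pb i :=
  hrep.2.2.2.1 i

theorem Representative.sum_weight_le_one {ε : ℝ} (hrep : Representative C0 Cb P0 Pb ε) :
    ∑ i, Pb i ≤ 1 := by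
  obtain ⟨-, -, hP0, -, hsum, -⟩ := hrep
  linarith

theorem abs_gBucket_le_one (hERM : ∀ s x, |ERM s x| ≤ 1) (S : Fin m → X)
    (𝒞 : Finset (Fin n → Fin m)) (x : X) : |gBucket ERM S 𝒞 x| ≤ 1 := by
  have h_sum : |∑ I ∈ 𝒞, ERM (S ∘ I) x| ≤ 𝒞.card :=
    calc |∑ I ∈ 𝒞, ERM (S ∘ I) x| ≤ ∑ I ∈ 𝒞, |ERM (S ∘ I) x| := Finset.abs_sum_le_sum_abs _ _
      _ ≤ ∑ _I ∈ 𝒞, (1 : ℝ) := Finset.sum_le_sum fun I _ => hERM _ x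
      _ = 𝒞.card := by simp
  rw [gBucket, abs_mul, abs_inv, Nat.abs_cast]
  calc (𝒞.card : ℝ)⁻¹ * |∑ I ∈ 𝒞, ERM (S ∘ I) x| ≤ (𝒞.card : ℝ)⁻¹ * 𝒞.card := by gcongr
    _ ≤ 1 := by
      rcases (Nat.zero_le 𝒞.card).eq_or_lt with h | h
      · simp [← h]
      · rw [inv_mul_cancel₀ (by positivity)]

theorem sum_ite_mem_inv_card_mul (S : Fin m → X) (𝒞 : Finset (Fin n → Fin m)) (x : X) :
    ∑ I, (if I ∈ 𝒞 then (𝒞.card : ℝ)⁻¹ else 0) * ERM (S ∘ I) x = gBucket ERM S 𝒞 x := by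
  simp only [gBucket, Finset.mul_sum, ite_mul, zero_mul, Finset.sum_ite_mem, Finset.univ_inter]

theorem Representative.gAvg_eq {ε : ℝ} (hrep : Representative C0 Cb P0 Pb ε) (S : Fin m → X)
    (x : X) : gAvg ERM S x = P0 * gBucket ERM S C0 x + ∑ i, Pb i * gBucket ERM S (Cb i) x := by
  obtain ⟨-, -, -, -, -, h_unif, -⟩ := hrep
  simp only [← sum_ite_mem_inv_card_mul, Finset.mul_sum]
  rw [Finset.sum_comm, ← Finset.sum_add_distrib, gAvg, Finset.mul_sum]
  refine Finset.sum_congr rfl fun I _ => ?_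
  rw [← h_unif I, add_mul, Finset.sum_mul]
  simp only [mul_assoc]

theorem Representative.le_sum_filter_margin_le (hrep : Representative C0 Cb P0 Pb (1 / 6))
    (hERM : ∀ s x, |ERM s x| ≤ 1) (hc : ∀ x, |c x| ≤ 1) (S : Fin m → X) {x : X}
    (hx : gAvg ERM S x * c x ≤ 1 / 3) :
    7 / 66 ≤ ∑ i with gBucket ERM S (Cb i) x * c x ≤ 5 / 6, Pb i := by
  have h_margin (𝒞 : Finset (Fin n → Fin m)) : -1 ≤ gBucket ERM S 𝒞 x * c x := by
    have : |gBucket ERM S 𝒞 x * c x| ≤ 1 := by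
      rw [abs_mul]
      exact mul_le_one₀ (abs_gBucket_le_one hERM S 𝒞 x) (abs_nonneg _) (hc x)
    exact (abs_le.mp this).1
  have h_mix := hrep.gAvg_eq (ERM := ERM) S x
  obtain ⟨-, -, hP0, hPb, hsum, -, hP0_le⟩ := hrep
  refine le_sum_filter_of_mixture_le _ hP0 (fun i _ => hPb i) (h_margin C0)
    (fun i _ => h_margin (Cb i)) hsum hP0_le ?_
  simpa only [h_mix, add_mul, Finset.sum_mul, mul_assoc] using hx

theorem Representative.le_sum_filter_marginLoss_gt [MeasurableSpace X] (D : Measure X)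
    [IsProbabilityMeasure D] (hrep : Representative C0 Cb P0 Pb (1 / 6))
    (hERM : ∀ s x, |ERM s x| ≤ 1) (hc : ∀ x, |c x| ≤ 1) {τ : ℝ} (hτ : 0 ≤ τ) {S : Fin m → X}
    (hS : 24 * τ < marginLoss D c (gAvg ERM S) (1 / 3)) :
    1 / 23 ≤ ∑ i with τ < marginLoss D c (gBucket ERM S (Cb i)) (5 / 6), Pb i := by
  have key := mul_measureReal_le_sum_filter_mul_add D Finset.univ
    (fun i => {x | gBucket ERM S (Cb i) x * c x ≤ 5 / 6}) (fun i _ => hrep.weight_nonneg i)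
    hrep.sum_weight_le_one hτ
    (A := {x | gAvg ERM S x * c x ≤ 1 / 3}) (a := 7 / 66)
    fun x hx => hrep.le_sum_filter_margin_le hERM hc S hx
  have hS' : 24 * τ < D.real {x | gAvg ERM S x * c x ≤ 1 / 3} := hS
  have hL : 0 < D.real {x | gAvg ERM S x * c x ≤ 1 / 3} := by linarith
  show 1 / 23 ≤ ∑ i with τ < D.real {x | gBucket ERM S (Cb i) x * c x ≤ 5 / 6}, Pb i
  by_contra! hW
  nlinarith [mul_lt_mul_of_pos_right hW hL]

end Voting

theorem structure_lemma_general
    (X : Type) [MeasurableSpace X] (D : Measure X) [IsProbabilityMeasure D]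
    (C : Set (X → ℝ)) (hpm : ∀ h ∈ C, PM1 h) (c : X → ℝ) (hc : c ∈ C)
    (m n : ℕ)
    (ERM : (Fin n → X) → (X → ℝ)) (hERM : IsERM C c ERM)
    (N : ℕ) (hN : 0 < N)
    (C0 : Finset (Fin n → Fin m)) (Cb : Fin N → Finset (Fin n → Fin m))
    (P0 : ℝ) (Pb : Fin N → ℝ)
    (hrep : Representative C0 Cb P0 Pb (1/6))
    (τ : ℝ) (hτ : 0 ≤ τ) :
    ((Measure.pi fun _ : Fin m => D)
        {S : Fin m → X | 24 * τ < marginLoss D c (gAvg ERM S) (1/3)}).toReal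
      ≤ 23 *
        (Finset.univ.sup' ⟨⟨0, hN⟩, Finset.mem_univ _⟩ fun i : Fin N =>
          ((Measure.pi fun _ : Fin m => D)
            {S : Fin m → X | τ < marginLoss D c (gBucket ERM S (Cb i)) (5/6)}).toReal) := by
  have hERM_abs : ∀ s x, |ERM s x| ≤ 1 := fun s x => (hpm _ (hERM s).1).abs_le_one x
  have hc_abs : ∀ x, |c x| ≤ 1 := (hpm c hc).abs_le_one
  set μ := Measure.pi fun _ : Fin m => D
  set A := {S : Fin m → X | 24 * τ < marginLoss D c (gAvg ERM S) (1/3)}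
  set Q := fun i : Fin N => {S : Fin m → X | τ < marginLoss D c (gBucket ERM S (Cb i)) (5/6)}
  set M := Finset.univ.sup' ⟨⟨0, hN⟩, Finset.mem_univ _⟩ fun i => μ.real (Q i)
  have hQ_le (i : Fin N) : μ.real (Q i) ≤ M := le_sup' (fun i => μ.real (Q i)) (mem_univ i)
  have h_avg := mul_measureReal_le_sum_mul_measureReal_inter μ Finset.univ Q
    (fun i _ => hrep.weight_nonneg i) (A := A) (a := 1 / 23)
    fun S hS => hrep.le_sum_filter_marginLoss_gt D hERM_abs hc_abs hτ hS
  calc μ.real A ≤ 23 * ∑ i, Pb i * μ.real (Q i ∩ A) := by linarith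
    _ ≤ 23 * ∑ i, Pb i * M := by
      gcongr with i
      · exact hrep.weight_nonneg i
      · exact (measureReal_mono Set.inter_subset_left).trans (hQ_le i)
    _ ≤ 23 * M := by
      rw [← Finset.sum_mul]
      gcongr
      exact mul_le_of_le_one_left (measureReal_nonneg.trans (hQ_le ⟨0, hN⟩))
        hrep.sum_weight_le_one

/-- Lemma 3: if `(F, P)` is `1/6`-representative, then for every `τ ≥ 0`,
`Pr_{S∼D^m}[L^{1/3}_D(g_S) > 24τ] ≤ 23 · max_{1≤i≤N} Pr_{S∼D^m}[L^{5/6}_D(g_{S(𝒞_i)}) > τ]`. -/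
theorem structure_lemma
    (X : Type) [MeasurableSpace X] (D : Measure X) [IsProbabilityMeasure D]
    (C : Set (X → ℝ)) (hpm : ∀ h ∈ C, PM1 h) (c : X → ℝ) (hc : c ∈ C)
    (m n : ℕ) (hm : 0 < m) (hn : 0 < n)
    (ERM : (Fin n → X) → (X → ℝ)) (hERM : IsERM C c ERM)
    (N : ℕ) (hN : 0 < N)
    (C0 : Finset (Fin n → Fin m)) (Cb : Fin N → Finset (Fin n → Fin m))
    (P0 : ℝ) (Pb : Fin N → ℝ)
    (hrep : Representative C0 Cb P0 Pb (1/6))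
    (τ : ℝ) (hτ : 0 ≤ τ) :
    ((Measure.pi fun _ : Fin m => D)
        {S : Fin m → X | 24 * τ < marginLoss D c (gAvg ERM S) (1/3)}).toReal
      ≤ 23 *
        (Finset.univ.sup' ⟨⟨0, hN⟩, Finset.mem_univ _⟩ fun i : Fin N =>
          ((Measure.pi fun _ : Fin m => D)
            {S : Fin m → X | τ < marginLoss D c (gBucket ERM S (Cb i)) (5/6)}).toReal) :=
  structure_lemma_general X D C hpm c hc m n ERM hERM N hN C0 Cb P0 Pb hrep τ hτ
end
end

section
/- For all positive integers m, n with m ≥ 100 and 0.02m ≤ n ≤ m: Pr_{I∼[m]^n}[ |D(I)| ∉ [0.01m, 0.9m] ] ≤ 1/6. -/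
/-!
Split the bad event into "few values" (`|D(I)| < m/100`) and "many values" (`|D(I)| > 0.9m`).

Few values: such an `I` takes values in some `d`-subset, `d = ⌊m/100⌋`, so there are at most
`C(m,d) d^n ≤ (200e)^d (m/100)^n` of them, and `n ≥ 2d` makes this at most `0.06^d m^n`.

Many values: the number `G` of values missed by `I` has mean `μ = m(1-1/m)^n ≥ 0.36m`, and its
variance is at most `μ` because two fixed values are missed jointly with probability
`(1-2/m)^n ≤ (1-1/m)^(2n)`. Chebyshev's inequality bounds `Pr[G < 0.1m]` by `0.06`.
-/

open Finset

noncomputable section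

/-- The number of distinct values appearing among the entries of `I ∈ [m]^n`. -/
def dcount {m n : ℕ} (I : Fin n → Fin m) : ℕ := (Finset.univ.image I).card

lemma mul_self_sub_mul_sub_two_pow_le (m k : ℕ) :
    ((m * m - m : ℕ) : ℝ) * ((m - 2 : ℕ) : ℝ) ^ k ≤ m ^ k * (m * (1 - (m : ℝ)⁻¹) ^ k) ^ 2 := by
  rcases Nat.lt_or_ge m 2 with hm | hm
  · have : m * m - m = 0 := by interval_cases m <;> rfl
    rw [this, Nat.cast_zero, zero_mul]
    positivity
  have hm' : (2 : ℝ) ≤ m := by exact_mod_cast hm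
  have hbase : (m : ℝ) * (1 - (m : ℝ)⁻¹) ^ 2 = m - 2 + (m : ℝ)⁻¹ := by field_simp; ring
  calc ((m * m - m : ℕ) : ℝ) * ((m - 2 : ℕ) : ℝ) ^ k
      ≤ m ^ 2 * (m * (1 - (m : ℝ)⁻¹) ^ 2) ^ k := by
        rw [Nat.cast_sub hm, Nat.cast_sub (Nat.le_mul_self m), hbase]
        push_cast
        gcongr
        · nlinarith
        · linarith [inv_pos.2 (show (0 : ℝ) < m by linarith)]
    _ = m ^ k * (m * (1 - (m : ℝ)⁻¹) ^ k) ^ 2 := by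
        rw [mul_pow, mul_pow, ← pow_mul, ← pow_mul]; ring

section MissingValues

variable {α β : Type*} [Fintype α] [DecidableEq α] [Fintype β] [DecidableEq β]

lemma card_filter_forall_mem (s : Finset β) :
    #{f : α → β | ∀ a, f a ∈ s} = #s ^ Fintype.card α := by
  have : ({f : α → β | ∀ a, f a ∈ s} : Finset _) = Fintype.piFinset fun _ ↦ s := by
    ext f; simp [Fintype.mem_piFinset]
  rw [this, Fintype.card_piFinset, prod_const, card_univ]

lemma card_filter_subset_compl_image (t : Finset β) :
    #{f : α → β | t ⊆ (univ.image f)ᶜ} = (Fintype.card β - #t) ^ Fintype.card α := by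
  rw [← card_compl, ← card_filter_forall_mem]
  congr 1
  ext f
  simp only [mem_filter, mem_univ, true_and, subset_iff, mem_compl, mem_image, not_exists]
  exact ⟨fun h a ha ↦ h ha a rfl, fun h _ hb a ha ↦ h a (ha ▸ hb)⟩

lemma card_filter_card_image_le_le {d : ℕ} (hd : d ≤ Fintype.card β) :
    #{f : α → β | #(univ.image f) ≤ d} ≤ (Fintype.card β).choose d * d ^ Fintype.card α := by
  calc #{f : α → β | #(univ.image f) ≤ d}
      ≤ #((powersetCard d (univ : Finset β)).biUnion fun s ↦ {f : α → β | ∀ a, f a ∈ s}) := by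
        refine card_le_card fun f hf ↦ ?_
        obtain ⟨s, hfs, -, hs⟩ := exists_subsuperset_card_eq (subset_univ (univ.image f))
          (mem_filter.1 hf).2 (by simpa using hd)
        simp only [mem_biUnion, mem_powersetCard_univ, mem_filter, mem_univ, true_and]
        exact ⟨s, hs, fun a ↦ hfs (mem_image_of_mem f (mem_univ a))⟩
    _ ≤ ∑ s ∈ powersetCard d (univ : Finset β), #{f : α → β | ∀ a, f a ∈ s} := card_biUnion_le
    _ = (Fintype.card β).choose d * d ^ Fintype.card α := by
        rw [sum_congr rfl fun s hs ↦ by rw [card_filter_forall_mem, (mem_powersetCard.1 hs).2],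
          sum_const, card_powersetCard, card_univ, smul_eq_mul]

lemma sum_card_compl_image :
    ∑ f : α → β, #(univ.image f)ᶜ = Fintype.card β * (Fintype.card β - 1) ^ Fintype.card α := by
  calc ∑ f : α → β, #(univ.image f)ᶜ
      = ∑ f : α → β, #{v | ({v} : Finset β) ⊆ (univ.image f)ᶜ} := by
        simp_rw [singleton_subset_iff, filter_univ_mem]
    _ = ∑ v : β, #{f : α → β | ({v} : Finset β) ⊆ (univ.image f)ᶜ} :=
        sum_card_bipartiteAbove_eq_sum_card_bipartiteBelow _
    _ = Fintype.card β * (Fintype.card β - 1) ^ Fintype.card α := by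
        simp_rw [card_filter_subset_compl_image, card_singleton, sum_const, card_univ,
          smul_eq_mul]

lemma sum_card_offDiag_compl_image :
    ∑ f : α → β, #(univ.image f)ᶜ.offDiag = (Fintype.card β * Fintype.card β - Fintype.card β) *
      (Fintype.card β - 2) ^ Fintype.card α := by
  calc ∑ f : α → β, #(univ.image f)ᶜ.offDiag
      = ∑ f : α → β, #{p ∈ (univ : Finset β).offDiag | {p.1, p.2} ⊆ (univ.image f)ᶜ} := by
        congr! 2 with f
        ext p
        simp only [mem_offDiag, mem_filter, insert_subset_iff, singleton_subset_iff, mem_univ,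
          true_and]
        tauto
    _ = ∑ p ∈ (univ : Finset β).offDiag, #{f : α → β | {p.1, p.2} ⊆ (univ.image f)ᶜ} :=
        sum_card_bipartiteAbove_eq_sum_card_bipartiteBelow _
    _ = (Fintype.card β * Fintype.card β - Fintype.card β) *
          (Fintype.card β - 2) ^ Fintype.card α := by
        rw [sum_congr rfl fun p hp ↦ by
          rw [card_filter_subset_compl_image, card_pair (mem_offDiag.1 hp).2.2],
          sum_const, offDiag_card, card_univ, smul_eq_mul]

lemma sum_sq_sub_mean_card_compl_image_le :
    ∑ f : α → β, ((#(univ.image f)ᶜ : ℝ) -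
        Fintype.card β * (1 - (Fintype.card β : ℝ)⁻¹) ^ Fintype.card α) ^ 2
      ≤ Fintype.card β ^ Fintype.card α *
        (Fintype.card β * (1 - (Fintype.card β : ℝ)⁻¹) ^ Fintype.card α) := by
  set m := Fintype.card β
  set k := Fintype.card α
  set μ : ℝ := m * (1 - (m : ℝ)⁻¹) ^ k
  have hsum : ∑ f : α → β, (#(univ.image f)ᶜ : ℝ) = m ^ k * μ := by
    rw [← Nat.cast_sum, sum_card_compl_image]
    change ((m * (m - 1) ^ k : ℕ) : ℝ) = m ^ k * μ
    rcases Nat.eq_zero_or_pos m with hm | hm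
    · simp [μ, hm]
    have : ((m - 1 : ℕ) : ℝ) = m * (1 - (m : ℝ)⁻¹) := by
      rw [Nat.cast_sub hm, mul_sub, mul_inv_cancel₀ (by positivity)]; simp
    push_cast [this, μ, mul_pow]
    ring
  have hsum_sq : ∑ f : α → β, (#(univ.image f)ᶜ : ℝ) ^ 2
      = m ^ k * μ + ((m * m - m : ℕ) : ℝ) * ((m - 2 : ℕ) : ℝ) ^ k := by
    have (s : Finset β) : (#s : ℝ) ^ 2 = #s + #s.offDiag := by
      rw [offDiag_card, Nat.cast_sub (Nat.le_mul_self _)]; push_cast; ring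
    simp_rw [this, sum_add_distrib, hsum, ← Nat.cast_sum, sum_card_offDiag_compl_image]
    push_cast; rfl
  have hcard : ((univ : Finset (α → β)).card : ℝ) = m ^ k := by
    rw [card_univ, Fintype.card_fun]; push_cast; rfl
  calc ∑ f : α → β, ((#(univ.image f)ᶜ : ℝ) - μ) ^ 2
      = ∑ f : α → β, (#(univ.image f)ᶜ : ℝ) ^ 2
          - 2 * μ * ∑ f : α → β, (#(univ.image f)ᶜ : ℝ) + m ^ k * μ ^ 2 := by
        simp only [sub_sq, sum_add_distrib, sum_sub_distrib, ← sum_mul, ← mul_sum, sum_const,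
          hcard, nsmul_eq_mul]
        ring
    _ ≤ m ^ k * μ := by
        rw [hsum_sq, hsum]; nlinarith [mul_self_sub_mul_sub_two_pow_le m k]

end MissingValues

lemma card_filter_le_sub_mul_sq_le {ι : Type*} (s : Finset ι) (X : ι → ℝ) (c : ℝ) {a : ℝ}
    (ha : 0 ≤ a) : #{i ∈ s | X i ≤ c - a} * a ^ 2 ≤ ∑ i ∈ s, (X i - c) ^ 2 := by
  calc #{i ∈ s | X i ≤ c - a} * a ^ 2 = ∑ i ∈ s with X i ≤ c - a, a ^ 2 := by
        rw [sum_const, nsmul_eq_mul]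
    _ ≤ ∑ i ∈ s with X i ≤ c - a, (X i - c) ^ 2 := by
        refine sum_le_sum fun i hi ↦ ?_
        have := (mem_filter.1 hi).2
        nlinarith
    _ ≤ ∑ i ∈ s, (X i - c) ^ 2 :=
        sum_le_sum_of_subset_of_nonneg (filter_subset _ _) fun _ _ _ ↦ sq_nonneg _

lemma Nat.choose_le_exp_mul_div_pow (n k : ℕ) :
    (n.choose k : ℝ) ≤ (Real.exp 1 * n / k) ^ k := by
  rcases Nat.eq_zero_or_pos k with rfl | hk
  · simp
  have hk' : (0 : ℝ) < k := by exact_mod_cast hk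
  calc (n.choose k : ℝ) ≤ n ^ k / k.factorial := Nat.choose_le_pow_div k n
    _ = (n / k) ^ k * ((k : ℝ) ^ k / k.factorial) := by rw [div_pow]; field_simp
    _ ≤ (n / k) ^ k * Real.exp k := by gcongr; exact Real.pow_div_factorial_le_exp _ hk'.le k
    _ = (Real.exp 1 * n / k) ^ k := by
        rw [← Real.exp_one_pow, mul_div_assoc, mul_pow, mul_comm]

lemma Real.exp_neg_one_le_one_sub_inv_pow (k : ℕ) :
    Real.exp (-1) ≤ (1 - ((k : ℝ) + 1)⁻¹) ^ k := by
  rcases Nat.eq_zero_or_pos k with rfl | hk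
  · simp [Real.exp_le_one_iff]
  have hk' : (0 : ℝ) < k := by exact_mod_cast hk
  have h : (1 - ((k : ℝ) + 1)⁻¹) = (1 + (k : ℝ)⁻¹)⁻¹ := by field_simp; ring
  calc Real.exp (-1) = (Real.exp (k : ℝ)⁻¹ ^ k)⁻¹ := by
        rw [← Real.exp_nat_mul, mul_inv_cancel₀ hk'.ne', Real.exp_neg]
    _ ≤ ((1 + (k : ℝ)⁻¹) ^ k)⁻¹ := by
        gcongr
        linarith [Real.add_one_le_exp (k : ℝ)⁻¹]
    _ = (1 - ((k : ℝ) + 1)⁻¹) ^ k := by rw [h, inv_pow]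

lemma le_one_sub_inv_pow_of_le {m n : ℕ} (hm : 100 ≤ m) (hn : n ≤ m) :
    (0.36 : ℝ) ≤ (1 - (m : ℝ)⁻¹) ^ n := by
  obtain ⟨k, rfl⟩ : ∃ k, m = k + 1 := ⟨m - 1, by omega⟩
  have hk : (99 : ℝ) ≤ k := by exact_mod_cast (by omega : 99 ≤ k)
  have hx : (0.99 : ℝ) ≤ 1 - ((k : ℝ) + 1)⁻¹ := by
    rw [le_sub_comm, inv_le_comm₀ (by positivity) (by norm_num)]
    linarith
  push_cast
  calc (0.36 : ℝ) ≤ Real.exp (-1) * 0.99 := by linarith [Real.exp_neg_one_gt_d9]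
    _ ≤ (1 - ((k : ℝ) + 1)⁻¹) ^ k * (1 - ((k : ℝ) + 1)⁻¹) := by
        gcongr
        exact Real.exp_neg_one_le_one_sub_inv_pow k
    _ = (1 - ((k : ℝ) + 1)⁻¹) ^ (k + 1) := (pow_succ _ _).symm
    _ ≤ (1 - ((k : ℝ) + 1)⁻¹) ^ n :=
        pow_le_pow_of_le_one (by linarith) (sub_le_self _ (by positivity)) hn

lemma card_dcount_lt_le {m n : ℕ} (hm : 100 ≤ m) (hn : (0.02 : ℝ) * m ≤ n) :
    (#{I : Fin n → Fin m | (dcount I : ℝ) < 0.01 * m} : ℝ) ≤ 0.06 * m ^ n := by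
  set d := m / 100
  have hd : 1 ≤ d := by omega
  have hdm : (100 * d : ℝ) ≤ m := by exact_mod_cast Nat.mul_div_le m 100
  have hmd : (m : ℝ) ≤ 200 * d := by exact_mod_cast (by omega : m ≤ 200 * d)
  have hdn : 2 * d ≤ n := by exact_mod_cast (show (2 * d : ℝ) ≤ n by linarith)
  have hsub : ({I : Fin n → Fin m | (dcount I : ℝ) < 0.01 * m} : Finset _)
      ⊆ ({I | #(univ.image I) ≤ d} : Finset (Fin n → Fin m)) := by
    refine monotone_filter_right _ fun I _ hI ↦ (Nat.le_div_iff_mul_le (by norm_num)).2 ?_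
    have : (dcount I * 100 : ℝ) < m := by linarith
    exact_mod_cast this.le
  have hchoose : (m.choose d : ℝ) ≤ 600 ^ d := by
    refine (Nat.choose_le_exp_mul_div_pow m d).trans (pow_le_pow_left₀ (by positivity) ?_ d)
    rw [div_le_iff₀ (by positivity)]
    nlinarith [Real.exp_one_lt_d9, Real.exp_pos 1]
  calc (#{I : Fin n → Fin m | (dcount I : ℝ) < 0.01 * m} : ℝ)
      ≤ m.choose d * d ^ n := by
        have := (card_le_card hsub).trans
          (card_filter_card_image_le_le (by rw [Fintype.card_fin]; omega))
        rw [Fintype.card_fin, Fintype.card_fin] at this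
        exact_mod_cast this
    _ ≤ 600 ^ d * (m / 100) ^ n := by gcongr; linarith
    _ = 0.06 ^ d * (100 ^ (2 * d) / 100 ^ n) * m ^ n := by
        rw [div_pow, pow_mul, show (600 : ℝ) = 0.06 * 100 ^ 2 by norm_num, mul_pow]
        field_simp
    _ ≤ 0.06 * 1 * m ^ n := by
        have h1 : (0.06 : ℝ) ^ d ≤ 0.06 := pow_le_of_le_one (by norm_num) (by norm_num) (by omega)
        have h2 : (100 : ℝ) ^ (2 * d) / 100 ^ n ≤ 1 :=
          div_le_one_of_le₀ (pow_le_pow_right₀ (by norm_num) hdn) (by positivity)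
        gcongr
    _ = 0.06 * m ^ n := by ring

lemma card_dcount_gt_le {m n : ℕ} (hm : 100 ≤ m) (hn : n ≤ m) :
    (#{I : Fin n → Fin m | 0.9 * m < (dcount I : ℝ)} : ℝ) ≤ 0.06 * m ^ n := by
  have hm' : (100 : ℝ) ≤ m := by exact_mod_cast hm
  set q := (1 - (m : ℝ)⁻¹) ^ n
  have hq : 0.36 ≤ q := le_one_sub_inv_pow_of_le hm hn
  have hvar := sum_sq_sub_mean_card_compl_image_le (α := Fin n) (β := Fin m)
  simp only [Fintype.card_fin] at hvar
  have hcheb := card_filter_le_sub_mul_sq_le univ (fun I : Fin n → Fin m ↦ (#(univ.image I)ᶜ : ℝ))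
    (m * q) (a := (q - 0.1) * m) (by nlinarith)
  have hsub : ({I : Fin n → Fin m | 0.9 * m < (dcount I : ℝ)} : Finset _)
      ⊆ ({I | (#(univ.image I)ᶜ : ℝ) ≤ m * q - (q - 0.1) * m} : Finset (Fin n → Fin m)) := by
    refine monotone_filter_right _ fun I _ hI ↦ ?_
    have : (#(univ.image I)ᶜ : ℝ) = m - dcount I := by
      rw [card_compl, Fintype.card_fin, Nat.cast_sub (by simpa using card_le_univ (univ.image I))]
      rfl
    linarith
  have hpos : 0 < ((q - 0.1) * m) ^ 2 := pow_pos (mul_pos (by linarith) (by linarith)) 2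
  refine le_of_mul_le_mul_right ?_ hpos
  calc (#{I : Fin n → Fin m | 0.9 * m < (dcount I : ℝ)} : ℝ) * ((q - 0.1) * m) ^ 2
      ≤ m ^ n * (m * q) := by
        refine le_trans ?_ (hcheb.trans hvar)
        gcongr
    _ ≤ 0.06 * m ^ n * ((q - 0.1) * m) ^ 2 := by
        have : m * q ≤ 0.06 * ((q - 0.1) * m) ^ 2 := by
          nlinarith [mul_nonneg (sub_nonneg.2 hq) (by linarith : (0 : ℝ) ≤ 6 * q - 0.04),
            mul_nonneg (sub_nonneg.2 hm') (sq_nonneg (q - 0.1))]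
        calc (m : ℝ) ^ n * (m * q) ≤ m ^ n * (0.06 * ((q - 0.1) * m) ^ 2) := by gcongr
          _ = 0.06 * m ^ n * ((q - 0.1) * m) ^ 2 := by ring

theorem distinct_count_tail_bound_general (m n : ℕ) (hm : 100 ≤ m)
    (hn1 : (0.02 : ℝ) * m ≤ (n : ℝ)) (hn2 : n ≤ m) :
    ((Finset.univ.filter fun I : Fin n → Fin m =>
        ¬((0.01 : ℝ) * m ≤ (dcount I : ℝ) ∧ (dcount I : ℝ) ≤ (0.9 : ℝ) * m)).card : ℝ)
      / (m : ℝ) ^ n ≤ 1/6 := by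
  simp_rw [not_and_or, not_le, filter_or]
  rw [div_le_iff₀ (by positivity)]
  refine (Nat.cast_le.2 (card_union_le _ _)).trans ?_
  push_cast
  linarith [card_dcount_lt_le hm hn1, card_dcount_gt_le hm hn2,
    pow_nonneg (Nat.cast_nonneg (α := ℝ) m) n]

/-- Lemma 5: for `m ≥ 100` and `0.02 m ≤ n ≤ m`, the probability that a
uniform `I ∈ [m]^n` has a number of distinct entries outside `[0.01 m, 0.9 m]` is at
most `1/6`. -/
theorem distinct_count_tail_bound (m n : ℕ) (hm : 100 ≤ m) (hn0 : 0 < n)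
    (hn1 : (0.02 : ℝ) * m ≤ (n : ℝ)) (hn2 : n ≤ m) :
    ((Finset.univ.filter fun I : Fin n → Fin m =>
        ¬((0.01 : ℝ) * m ≤ (dcount I : ℝ) ∧ (dcount I : ℝ) ≤ (0.9 : ℝ) * m)).card : ℝ)
      / (m : ℝ) ^ n ≤ 1/6 :=
  distinct_count_tail_bound_general m n hm hn1 hn2
end
end

section
/- For all positive integers m, n with 0.02m ≤ n ≤ m: Pr_{I∼[m]^n}[ |D(I)| < 0.01m ] ≤ (e/100)^{0.01m}. -/
/-!
An `I` with at most `s` distinct entries takes all its values in some `s`-subset of `[m]`, so there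
are at most `C(m, s) s^n ≤ (e m / s)^s s^n` of them, a fraction at most `e^s (s/m)^(n-s)` of `[m]^n`.
With `s = ⌊0.01 m⌋` we have `s/m ≤ 1/100` and `n - s ≥ 0.02 m - 0.01 m = 0.01 m`.
-/

open Finset

noncomputable section

theorem card_filter_card_image_le {ι α : Type*} [Fintype ι] [DecidableEq ι] [Fintype α]
    [DecidableEq α] {s : ℕ} (hs : s ≤ Fintype.card α) :
    #{f : ι → α | #(univ.image f) ≤ s} ≤ (Fintype.card α).choose s * s ^ Fintype.card ι := by
  have hcover : ({f : ι → α | #(univ.image f) ≤ s} : Finset _) ⊆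
      (powersetCard s univ).biUnion fun S => Fintype.piFinset fun _ => S := by
    intro f hf
    obtain ⟨S, hfS, hS⟩ := exists_superset_card_eq (mem_filter.1 hf).2 (by simpa using hs)
    exact mem_biUnion.2 ⟨S, mem_powersetCard.2 ⟨subset_univ S, hS⟩,
      Fintype.mem_piFinset.2 fun i => hfS (mem_image_of_mem f (mem_univ i))⟩
  calc #{f : ι → α | #(univ.image f) ≤ s}
      ≤ ∑ S ∈ powersetCard s (univ : Finset α), #(Fintype.piFinset fun _ : ι => S) :=
        (card_le_card hcover).trans card_biUnion_le
    _ = (Fintype.card α).choose s * s ^ Fintype.card ι := by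
        rw [sum_congr rfl fun S hS => by
          rw [Fintype.card_piFinset, prod_const, (mem_powersetCard.1 hS).2, card_univ]]
        simp

theorem Nat.choose_mul_pow_self_le_exp_mul_pow (m s : ℕ) :
    (m.choose s : ℝ) * s ^ s ≤ Real.exp s * m ^ s :=
  calc (m.choose s : ℝ) * s ^ s ≤ m ^ s / s.factorial * s ^ s := by
        gcongr; exact Nat.choose_le_pow_div s m
    _ = (s : ℝ) ^ s / s.factorial * m ^ s := by ring
    _ ≤ Real.exp s * m ^ s := by
        gcongr; exact Real.pow_div_factorial_le_exp _ (Nat.cast_nonneg s) s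

theorem card_filter_dcount_le_div_pow_le {m n s : ℕ} (hsm : s ≤ m) (hsn : s ≤ n) :
    (#{I : Fin n → Fin m | dcount I ≤ s} : ℝ) / m ^ n ≤ Real.exp s * (s / m) ^ (n - s) := by
  have hcount : (#{I : Fin n → Fin m | dcount I ≤ s} : ℝ) ≤ m.choose s * s ^ n := by
    have := card_filter_card_image_le (ι := Fin n) (α := Fin m) (s := s) (by simpa using hsm)
    simp only [Fintype.card_fin] at this
    exact_mod_cast this
  have hchoose : (m.choose s : ℝ) * s ^ s / m ^ s ≤ Real.exp s :=
    div_le_of_le_mul₀ (by positivity) (by positivity)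
      (Nat.choose_mul_pow_self_le_exp_mul_pow m s)
  calc (#{I : Fin n → Fin m | dcount I ≤ s} : ℝ) / m ^ n
      ≤ (m.choose s * s ^ s * s ^ (n - s)) / (m ^ s * m ^ (n - s)) := by
        rw [mul_assoc, ← pow_add, ← pow_add, Nat.add_sub_cancel' hsn]
        gcongr
    _ = (m.choose s * s ^ s / m ^ s) * (s / m : ℝ) ^ (n - s) := by
        rw [mul_div_mul_comm, div_pow]
    _ ≤ Real.exp s * (s / m : ℝ) ^ (n - s) := by gcongr

theorem Real.exp_mul_pow_le_div_rpow {s k : ℕ} {x r c : ℝ} (hc : 1 ≤ c) (hr0 : 0 ≤ r)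
    (hr : r ≤ c⁻¹) (hsx : s ≤ x) (hxk : x ≤ k) :
    Real.exp s * r ^ k ≤ (Real.exp 1 / c) ^ x := by
  have hc0 : 0 < c := zero_lt_one.trans_le hc
  calc Real.exp s * r ^ k ≤ Real.exp x * (c ^ (k : ℝ))⁻¹ := by
        rw [Real.rpow_natCast, ← inv_pow]
        gcongr
    _ ≤ Real.exp x * (c ^ x)⁻¹ := by
        gcongr
    _ = (Real.exp 1 / c) ^ x := by
        rw [Real.div_rpow (Real.exp_pos 1).le hc0.le, Real.exp_one_rpow, div_eq_mul_inv]

theorem distinct_count_lower_tail_general (m n : ℕ)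
    (hn1 : (0.02 : ℝ) * m ≤ (n : ℝ)) :
    ((Finset.univ.filter fun I : Fin n → Fin m =>
        (dcount I : ℝ) < (0.01 : ℝ) * m).card : ℝ) / (m : ℝ) ^ n
      ≤ (Real.exp 1 / 100) ^ ((0.01 : ℝ) * m) := by
  set x : ℝ := 0.01 * m
  set s : ℕ := ⌊x⌋₊
  have hx : 0 ≤ x := by positivity
  have hsx : (s : ℝ) ≤ x := Nat.floor_le hx
  have hsm : s ≤ m := by
    have : (s : ℝ) ≤ m := hsx.trans (by simp only [x]; linarith)
    exact_mod_cast this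
  have hsn : s ≤ n := by
    have : (s : ℝ) ≤ n := hsx.trans (by simp only [x]; linarith)
    exact_mod_cast this
  have hsub : (univ.filter fun I : Fin n → Fin m => (dcount I : ℝ) < x) ⊆
      univ.filter fun I => dcount I ≤ s := by
    intro I hI
    simp only [mem_filter, mem_univ, true_and] at hI ⊢
    exact Nat.le_floor hI.le
  have hratio : (s / m : ℝ) ≤ 100⁻¹ :=
    div_le_of_le_mul₀ (by positivity) (by norm_num) (by simp only [x] at hsx; linarith)
  have hnsx : x ≤ ((n - s : ℕ) : ℝ) := by
    rw [Nat.cast_sub hsn]; simp only [x] at *; linarith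
  calc _ ≤ (#{I : Fin n → Fin m | dcount I ≤ s} : ℝ) / m ^ n := by
        gcongr
    _ ≤ Real.exp s * (s / m) ^ (n - s) := card_filter_dcount_le_div_pow_le hsm hsn
    _ ≤ (Real.exp 1 / 100) ^ x :=
        Real.exp_mul_pow_le_div_rpow (by norm_num) (by positivity) hratio hsx hnsx

/-- for `0.02 m ≤ n ≤ m`, the probability that a uniform `I ∈ [m]^n` has
fewer than `0.01 m` distinct entries is at most `(e/100)^{0.01 m}`. -/
theorem distinct_count_lower_tail (m n : ℕ) (hm : 0 < m) (hn0 : 0 < n)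
    (hn1 : (0.02 : ℝ) * m ≤ (n : ℝ)) (hn2 : n ≤ m) :
    ((Finset.univ.filter fun I : Fin n → Fin m =>
        (dcount I : ℝ) < (0.01 : ℝ) * m).card : ℝ) / (m : ℝ) ^ n
      ≤ (Real.exp 1 / 100) ^ ((0.01 : ℝ) * m) :=
  distinct_count_lower_tail_general m n hn1
end
end

section
/- For all positive integers m, n with n ≤ m: Pr_{I∼[m]^n}[ |D(I)| ≥ 0.9m ] ≤ 6·e^{−0.2m}. -/
/-!
If `I` has at least `k = m - ⌊m/10⌋` distinct entries, then some `k` positions of `I` carry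
pairwise distinct values, so a union bound over the `C(n, k)` choices of positions bounds the
probability by `C(n, k) · m(m-1)⋯(m-k+1) / m^k`. As `n ≤ m`, this is at most
`(m! / m^m) · (m^r / r!)^2` with `r = m - k ≤ m/10`. Stirling's bound `m! ≤ e √m (m/e)^m` and
`m^r / r! ≤ 10^r e^{m/10}` make it at most `e √m e^{-3m/10}`, and `e √m ≤ 6 e^{m/10}`.
-/

open Finset

noncomputable section

open Real
open scoped Nat

section Counting

variable {ι α : Type*} [Fintype ι] [DecidableEq ι] [Fintype α] [DecidableEq α]

theorem card_filter_injOn_le (P : Finset ι) :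
    #{f : ι → α | Set.InjOn f P} ≤
      (Fintype.card α).descFactorial #P * Fintype.card α ^ (Fintype.card ι - #P) := by
  rw [← Fintype.card_subtype]
  calc Fintype.card {f : ι → α // Set.InjOn f P}
      ≤ Fintype.card ((P ↪ α) × ((Pᶜ : Finset ι) → α)) :=
        Fintype.card_le_of_injective
          (fun f =>
            (⟨fun p => f.1 p, fun p q h => Subtype.ext (f.2 p.2 q.2 h)⟩, fun q => f.1 q))
          fun f g hfg => by
            simp only [Prod.mk.injEq] at hfg
            refine Subtype.ext (funext fun x => ?_)
            by_cases hx : x ∈ P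
            · exact DFunLike.congr_fun hfg.1 ⟨x, hx⟩
            · exact congrFun hfg.2 ⟨x, by simpa⟩
    _ = _ := by
      rw [Fintype.card_prod, Fintype.card_embedding_eq, Fintype.card_fun]
      simp

theorem card_filter_le_card_image_le (k : ℕ) :
    #{f : ι → α | k ≤ #(univ.image f)} ≤
      (Fintype.card ι).choose k *
        ((Fintype.card α).descFactorial k * Fintype.card α ^ (Fintype.card ι - k)) := by
  have hcover : ({f : ι → α | k ≤ #(univ.image f)} : Finset _) ⊆
      (powersetCard k univ).biUnion fun P : Finset ι => {f : ι → α | Set.InjOn f P} := by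
    intro f hf
    obtain ⟨u, -, hinj, himage⟩ :=
      exists_subset_injOn_image_eq_of_surjOn (f := f) Set.univ (univ.image f)
        (by simp [Set.SurjOn])
    rw [mem_filter, ← himage, Finset.card_image_of_injOn hinj] at hf
    obtain ⟨P, hPu, hP⟩ := exists_subset_card_eq hf.2
    simpa using ⟨P, hP, hinj.mono hPu⟩
  calc _ ≤ ∑ P ∈ powersetCard k univ, #{f : ι → α | Set.InjOn f P} :=
        (card_le_card hcover).trans card_biUnion_le
    _ ≤ ∑ _P ∈ powersetCard k (univ : Finset ι),
          (Fintype.card α).descFactorial k * Fintype.card α ^ (Fintype.card ι - k) :=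
        sum_le_sum fun P hP => (mem_powersetCard.1 hP).2 ▸ card_filter_injOn_le P
    _ = _ := by simp

end Counting

theorem card_filter_le_dcount_mul_pow_le (m n k : ℕ) :
    #{I : Fin n → Fin m | k ≤ dcount I} * m ^ k ≤ n.choose k * m.descFactorial k * m ^ n := by
  have h := card_filter_le_card_image_le (ι := Fin n) (α := Fin m) k
  simp only [Fintype.card_fin] at h
  rcases le_or_gt k n with hkn | hnk
  · calc _ ≤ n.choose k * (m.descFactorial k * m ^ (n - k)) * m ^ k :=
          Nat.mul_le_mul_right _ h
      _ = _ := by rw [mul_assoc, mul_assoc, pow_sub_mul_pow m hkn, mul_assoc]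
  · have hempty : #{I : Fin n → Fin m | k ≤ dcount I} = 0 := by
      rw [card_eq_zero, filter_eq_empty_iff]
      simpa [dcount, Nat.choose_eq_zero_of_lt hnk] using h
    simp [hempty]

theorem Nat.choose_mul_descFactorial_mul_factorial_sq_le {m n k : ℕ} (hn : n ≤ m)
    (hk : k ≤ m) : n.choose k * m.descFactorial k * (m - k)! ^ 2 ≤ m ^ (m - k) * m ! :=
  calc n.choose k * m.descFactorial k * (m - k)! ^ 2
      = (n.choose k * (m - k)!) * ((m - k)! * m.descFactorial k) := by ring
    _ ≤ (m.choose (m - k) * (m - k)!) * m ! := by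
        gcongr
        · exact (Nat.choose_le_choose k hn).trans (Nat.choose_symm hk).ge
        · exact (Nat.factorial_mul_descFactorial hk).le
    _ ≤ m ^ (m - k) * m ! := by
        gcongr
        rw [mul_comm, ← Nat.descFactorial_eq_factorial_mul_choose]
        exact Nat.descFactorial_le_pow m _

theorem card_filter_le_dcount_div_pow_le {m n r : ℕ} (hm : 0 < m) (hn : n ≤ m) (hr : r ≤ m) :
    (#{I : Fin n → Fin m | m - r ≤ dcount I} : ℝ) / m ^ n ≤
      m ! / m ^ m * (m ^ r / r !) ^ 2 := by
  have hcount := card_filter_le_dcount_mul_pow_le m n (m - r)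
  have hchoose := Nat.choose_mul_descFactorial_mul_factorial_sq_le hn (Nat.sub_le m r)
  rw [Nat.sub_sub_self hr] at hchoose
  set A := #{I : Fin n → Fin m | m - r ≤ dcount I}
  have key : A * m ^ m * r ! ^ 2 ≤ m ! * (m ^ r) ^ 2 * m ^ n := by
    calc _ = A * m ^ (m - r) * r ! ^ 2 * m ^ r := by
          rw [← pow_sub_mul_pow m hr]; ring
      _ ≤ n.choose (m - r) * m.descFactorial (m - r) * m ^ n * r ! ^ 2 * m ^ r := by gcongr
      _ = n.choose (m - r) * m.descFactorial (m - r) * r ! ^ 2 * m ^ r * m ^ n := by ring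
      _ ≤ m ^ r * m ! * m ^ r * m ^ n := by gcongr
      _ = _ := by ring
  rw [div_pow, div_mul_div_comm, div_le_div_iff₀ (by positivity) (by positivity), ← mul_assoc]
  exact_mod_cast key

theorem factorial_div_pow_self_le {n : ℕ} (hn : n ≠ 0) :
    (n ! : ℝ) / n ^ n ≤ exp 1 * √n * exp (-n) := by
  have hseq : Stirling.stirlingSeq n ≤ exp 1 / √2 := by
    obtain ⟨k, rfl⟩ := Nat.exists_eq_succ_of_ne_zero hn
    simpa using Stirling.stirlingSeq'_antitone (Nat.zero_le k)
  have hpos : (0 : ℝ) < √(2 * n) * (n / exp 1) ^ n := by positivity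
  rw [Stirling.stirlingSeq, div_le_iff₀ hpos] at hseq
  rw [div_le_iff₀ (by positivity)]
  calc (n ! : ℝ) ≤ exp 1 / √2 * (√(2 * n) * (n / exp 1) ^ n) := hseq
    _ = exp 1 * √n * exp (-n) * n ^ n := by
      rw [Real.sqrt_mul zero_le_two, div_pow, Real.exp_neg, ← Real.exp_nat_mul, mul_one]
      field_simp

theorem pow_div_factorial_le_pow_mul_exp {x c : ℝ} (hx : 0 ≤ x) (hc : 0 < c) (r : ℕ) :
    x ^ r / r ! ≤ c ^ r * exp (x / c) := by
  have h := Real.pow_div_factorial_le_exp (x / c) (div_nonneg hx hc.le) r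
  rwa [div_pow, div_right_comm, div_le_iff₀ (by positivity), mul_comm] at h

theorem exp_one_mul_sqrt_le {x : ℝ} (hx : 0 ≤ x) : exp 1 * √x ≤ 6 * exp (x / 10) := by
  have he : exp 1 ≤ 3 := Real.exp_one_lt_d9.le.trans (by norm_num)
  have hlin : 1 + x / 10 ≤ exp (x / 10) := by linarith [Real.add_one_le_exp (x / 10)]
  have hsq : √x ^ 2 = x := Real.sq_sqrt hx
  nlinarith [Real.sqrt_nonneg x, sq_nonneg (√x - 5 / 2)]

theorem hundred_pow_le_exp {r : ℕ} {x : ℝ} (h : 10 * r ≤ x) :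
    (100 : ℝ) ^ r ≤ exp (x / 2) := by
  have h100 : (100 : ℝ) ≤ exp 5 :=
    calc (100 : ℝ) ≤ 2.7182818283 ^ 5 := by norm_num
      _ ≤ exp 1 ^ 5 := by gcongr; exact Real.exp_one_gt_d9.le
      _ = exp 5 := by rw [← Real.exp_nat_mul]; norm_num
  calc (100 : ℝ) ^ r ≤ exp 5 ^ r := by gcongr
    _ = exp (5 * r) := by rw [← Real.exp_nat_mul, mul_comm]
    _ ≤ exp (x / 2) := by gcongr; linarith

theorem distinct_count_upper_tail_general (m n : ℕ) (hm : 0 < m) (hn2 : n ≤ m) :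
    ((Finset.univ.filter fun I : Fin n → Fin m =>
        (0.9 : ℝ) * m ≤ (dcount I : ℝ)).card : ℝ) / (m : ℝ) ^ n
      ≤ 6 * Real.exp (-(0.2 : ℝ) * m) := by
  set r := m / 10
  have hr : 10 * r ≤ m := Nat.mul_div_le m 10
  have hevent : (univ.filter fun I : Fin n → Fin m => (0.9 : ℝ) * m ≤ (dcount I : ℝ)) ⊆
      ({I | m - r ≤ dcount I} : Finset _) := by
    intro I hI
    simp only [mem_filter, mem_univ, true_and] at hI ⊢
    have h9 : 9 * m ≤ 10 * dcount I := by
      exact_mod_cast (by linarith : (9 * m : ℝ) ≤ 10 * dcount I)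
    omega
  calc _ ≤ (#{I : Fin n → Fin m | m - r ≤ dcount I} : ℝ) / m ^ n := by gcongr
    _ ≤ m ! / m ^ m * (m ^ r / r !) ^ 2 := card_filter_le_dcount_div_pow_le hm hn2 (by omega)
    _ ≤ exp 1 * √m * exp (-m) * (10 ^ r * exp (m / 10)) ^ 2 := by
        gcongr
        · exact factorial_div_pow_self_le hm.ne'
        · exact pow_div_factorial_le_pow_mul_exp (Nat.cast_nonneg m) (by norm_num) r
    _ = exp 1 * √m * exp (-m + m / 5) * 100 ^ r := by
        have h10 : ((10 : ℝ) ^ r) ^ 2 = 100 ^ r := by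
          rw [← pow_mul, mul_comm, pow_mul]; norm_num
        rw [mul_pow, h10, ← Real.exp_nat_mul, exp_add]; ring_nf
    _ ≤ 6 * exp (m / 10) * exp (-m + m / 5) * exp (m / 2) := by
        gcongr ?_ * _ * ?_
        · exact exp_one_mul_sqrt_le (Nat.cast_nonneg m)
        · exact hundred_pow_le_exp (by exact_mod_cast hr)
    _ = 6 * exp (-(0.2 : ℝ) * m) := by
        rw [mul_assoc 6, ← exp_add, mul_assoc, ← exp_add]; ring_nf

/-- for `n ≤ m`, the probability that a uniform `I ∈ [m]^n` has at least
`0.9 m` distinct entries is at most `6 e^{-0.2 m}`. -/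
theorem distinct_count_upper_tail (m n : ℕ) (hm : 0 < m) (hn0 : 0 < n) (hn2 : n ≤ m) :
    ((Finset.univ.filter fun I : Fin n → Fin m =>
        (0.9 : ℝ) * m ≤ (dcount I : ℝ)).card : ℝ) / (m : ℝ) ^ n
      ≤ 6 * Real.exp (-(0.2 : ℝ) * m) :=
  distinct_count_upper_tail_general m n hm hn2

end
end

section
/- Fix positive integers m, n with 0.02m ≤ n ≤ m and an integer d' with ⌈0.01m⌉ ≤ d' ≤ ⌊0.9m⌋. Among the buckets {𝒞_{d',L} : L an ordered list of ℓ distinct indices from [m]}, every vector I ∈ [m]^n with |D(I)| = d' is contained in the same number of buckets, and every bucket has the same cardinality. Consequently, drawing a uniformly random list L and then a uniformly random I ∈ 𝒞_{d',L} yields I uniformly distributed on {I ∈ [m]^n : |D(I)| = d'}. -/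
/-!
A permutation `σ` of `[m]` maps the bucket of `L` onto the bucket of `σ ∘ L`, and whether `I`
lies in a bucket depends only on `D(I)`. Permutations act transitively on injective lists and
on the `d'`-subsets of `[m]`, so all buckets have a common size `M` and every `I` with
`|D(I)| = d'` lies in a common number `K` of buckets. Counting incidences gives
`#lists · M = #vectors · K`, which is the uniformity as soon as `K > 0`. For that, build a list
whose groups `L₂, …, L₁₉` at every level are drawn from `D(I)` and whose group `L₁` avoids
`D(I)`; this needs `ℓ ≤ d'` and `ℓ ≤ m − d'`.
-/

open Finset

noncomputable section

/-- The set of distinct values of `I`, as a finset. -/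
def dset {m n : ℕ} (I : Fin n → Fin m) : Finset (Fin m) := Finset.univ.image I

/-- The `k`-th consecutive group of length `20^j` of the list `L`. -/
def grp {m : ℕ} (j k : ℕ) (L : List (Fin m)) : List (Fin m) :=
  (L.drop (k * 20 ^ j)).take (20 ^ j)

/-- `BuildBucket_{d'}(L, U, V)`: if `L` has length `20^0 = 1`, return all `I ∈ [m]^n`
with exactly `d'` distinct values, whose distinct values contain `U` together with the
single entry of `L` and avoid `V`.  Otherwise split `L` into `20` consecutive groups
`L_0, …, L_19` and return the union over `i = 1, …, 19` of
`BuildBucket_{d'}(L_0, U ∪ ⋃_{j' ∈ {1,…,19} ∖ {i}} L_{j'}, V ∪ L_i)`. -/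
def buildBucket (m n d' : ℕ) : ℕ → List (Fin m) → Finset (Fin m) → Finset (Fin m) →
    Finset (Fin n → Fin m)
  | 0, L, U, V =>
      Finset.univ.filter fun I : Fin n → Fin m =>
        dcount I = d' ∧ U ∪ L.toFinset ⊆ dset I ∧ Disjoint V (dset I)
  | (j + 1), L, U, V =>
      (Finset.Icc 1 19).biUnion fun i =>
        buildBucket m n d' j (grp j 0 L)
          (U ∪ ((Finset.Icc 1 19).erase i).biUnion fun j' => (grp j j' L).toFinset)
          (V ∪ (grp j i L).toFinset)

/-- The bucket `𝒞_{d',L}` associated with a list `L` of `20^j` distinct indices,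
obtained as `BuildBucket_{d'}(L, ∅, ∅)`. -/
def bucketOf (m n d' j : ℕ) (L : Fin (20 ^ j) → Fin m) : Finset (Fin n → Fin m) :=
  buildBucket m n d' j (List.ofFn L) ∅ ∅

open Function

lemma inv_card_mul_sum_ite_inv_card_of_biregular {α β : Type*} [DecidableEq β]
    {S : Finset α} {T : Finset β} {B : α → Finset β} {M K : ℕ} (hBT : ∀ a ∈ S, B a ⊆ T)
    (hM : ∀ a ∈ S, #(B a) = M) (hK : ∀ b ∈ T, #{a ∈ S | b ∈ B a} = K) (hK0 : 0 < K)
    {b : β} (hb : b ∈ T) :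
    (#S : ℝ)⁻¹ * ∑ a ∈ S, (if b ∈ B a then (#(B a) : ℝ)⁻¹ else 0) = (#T : ℝ)⁻¹ := by
  have hdouble : #S * M = #T * K := card_mul_eq_card_mul (fun a b => b ∈ B a)
    (fun a ha => by
      rw [← hM a ha, bipartiteAbove, filter_mem_eq_inter, inter_eq_right.2 (hBT a ha)]) hK
  have hsum : ∑ a ∈ S, (if b ∈ B a then (#(B a) : ℝ)⁻¹ else 0) = K * (M : ℝ)⁻¹ := by
    rw [sum_congr rfl fun a ha => by rw [hM a ha], ← sum_filter, sum_const, nsmul_eq_mul, hK b hb]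
  have hT : 0 < #T := card_pos.2 ⟨b, hb⟩
  obtain ⟨hS, hM0⟩ := CanonicallyOrderedAdd.mul_pos.1 (hdouble ▸ Nat.mul_pos hT hK0)
  have hdoubleR : (#S : ℝ) * M = #T * K := by exact_mod_cast hdouble
  rw [hsum]
  field_simp
  linear_combination -hdoubleR

lemma exists_forall_eq_of_forall_eq {α β : Type*} [Nonempty β] {p : α → Prop} {f : α → β}
    (h : ∀ x y, p x → p y → f x = f y) : ∃ c, ∀ x, p x → f x = c := by
  by_cases hp : ∃ x, p x
  · obtain ⟨x, hx⟩ := hp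
    exact ⟨f x, fun y hy => h y x hy hx⟩
  · exact ⟨Classical.arbitrary β, fun x hx => (hp ⟨x, hx⟩).elim⟩

lemma List.toFinset_map {α β : Type*} [DecidableEq α] [DecidableEq β] (f : α → β)
    (l : List α) : (l.map f).toFinset = l.toFinset.image f := by
  ext; simp

section BuildBucket

variable {m n d' : ℕ}

lemma dcount_eq_card_dset (I : Fin n → Fin m) : dcount I = #(dset I) := rfl

lemma dset_comp (σ : Equiv.Perm (Fin m)) (I : Fin n → Fin m) :
    dset (σ ∘ I) = (dset I).image σ := by
  simp [dset, image_image]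

lemma grp_map (σ : Equiv.Perm (Fin m)) (j k : ℕ) (L : List (Fin m)) :
    grp j k (L.map σ) = (grp j k L).map σ := by
  simp [grp]

lemma mem_buildBucket_congr {I I' : Fin n → Fin m} (h : dset I = dset I') (j : ℕ)
    (L : List (Fin m)) (U V : Finset (Fin m)) :
    I ∈ buildBucket m n d' j L U V ↔ I' ∈ buildBucket m n d' j L U V := by
  induction j generalizing L U V with
  | zero =>
    simp only [buildBucket, mem_filter_univ]
    simp only [dcount_eq_card_dset, h]
  | succ j ih => simp only [buildBucket, mem_biUnion, ih]

lemma comp_mem_buildBucket_map_iff (σ : Equiv.Perm (Fin m)) (j : ℕ) (L : List (Fin m))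
    (U V : Finset (Fin m)) (I : Fin n → Fin m) :
    σ ∘ I ∈ buildBucket m n d' j (L.map σ) (U.image σ) (V.image σ) ↔
      I ∈ buildBucket m n d' j L U V := by
  induction j generalizing L U V with
  | zero =>
    simp only [buildBucket, mem_filter_univ]
    simp only [dcount_eq_card_dset, dset_comp,
      card_image_of_injective _ σ.injective, List.toFinset_map, ← image_union,
      image_subset_image_iff σ.injective, disjoint_image σ.injective]
  | succ j ih =>
    simp only [buildBucket, mem_biUnion, grp_map, List.toFinset_map, ← biUnion_image,
      ← image_union, ih]

lemma dcount_eq_of_mem_buildBucket {j : ℕ} {L : List (Fin m)} {U V : Finset (Fin m)}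
    {I : Fin n → Fin m} (h : I ∈ buildBucket m n d' j L U V) : dcount I = d' := by
  induction j generalizing L U V with
  | zero => exact (mem_filter.1 h).2.1
  | succ j ih =>
    obtain ⟨i, -, hi⟩ := mem_biUnion.1 h
    exact ih hi

lemma buildBucket_anti (j : ℕ) (L : List (Fin m)) {U U' V V' : Finset (Fin m)}
    (hU : U ⊆ U') (hV : V ⊆ V') : buildBucket m n d' j L U' V' ⊆ buildBucket m n d' j L U V := by
  induction j generalizing L U U' V V' with
  | zero =>
    intro I hI
    simp only [buildBucket, mem_filter, mem_univ, true_and] at hI ⊢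
    exact ⟨hI.1, (union_subset_union hU subset_rfl).trans hI.2.1, hI.2.2.mono_left hV⟩
  | succ j ih =>
    exact biUnion_subset_biUnion_of_subset_left _ subset_rfl |>.trans <|
      biUnion_mono fun i _ => ih _ (union_subset_union hU subset_rfl)
        (union_subset_union hV subset_rfl)

end BuildBucket

section Construction

variable {m n d' j : ℕ}

lemma grp_sublist (j k : ℕ) (L : List (Fin m)) : (grp j k L).Sublist L :=
  (List.take_sublist _ _).trans (List.drop_sublist _ _)

lemma grp_zero_append {L₀ : List (Fin m)} (h : L₀.length = 20 ^ j) (R : List (Fin m)) :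
    grp j 0 (L₀ ++ R) = L₀ := by
  rw [grp, zero_mul, List.drop_zero, ← h, List.take_left]

lemma grp_succ_append {G : List (Fin m)} (h : G.length = 20 ^ j) (k : ℕ) (R : List (Fin m)) :
    grp j (k + 1) (G ++ R) = grp j k R := by
  rw [grp, grp, add_one_mul, add_comm, ← h, List.drop_length_add_append]

lemma mem_buildBucket_succ_append {I : Fin n → Fin m} {L₀ : List (Fin m)}
    {U V A B : Finset (Fin m)} (hlen : L₀.length = 20 ^ j) (hB : #B = 20 ^ j)
    (h : I ∈ buildBucket m n d' j L₀ (U ∪ A) (V ∪ B)) :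
    I ∈ buildBucket m n d' (j + 1) (L₀ ++ (B.toList ++ A.toList)) U V := by
  have hBlen : B.toList.length = 20 ^ j := by rw [length_toList, hB]
  simp only [buildBucket, mem_biUnion]
  refine ⟨1, by simp, ?_⟩
  rw [grp_succ_append hlen, grp_zero_append hlen, grp_zero_append hBlen, toList_toFinset]
  refine buildBucket_anti j L₀ (union_subset_union subset_rfl ?_) subset_rfl h
  refine biUnion_subset.2 fun k hk => ?_
  obtain ⟨k, rfl⟩ : ∃ k', k = k' + 2 := ⟨k - 2, by simp at hk; omega⟩
  rw [grp_succ_append hlen, grp_succ_append hBlen]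
  intro x hx
  exact mem_toList.1 ((grp_sublist j k _).subset (List.mem_toFinset.1 hx))

lemma exists_mem_buildBucket {I : Fin n → Fin m} (hI : dcount I = d') (j : ℕ)
    {U V : Finset (Fin m)} (hU : U ⊆ dset I) (hV : Disjoint V (dset I))
    (hin : 20 ^ j ≤ #(dset I \ U)) (hout : 20 ^ j ≤ #((dset I)ᶜ \ V)) :
    ∃ L : List (Fin m), L.Nodup ∧ L.length = 20 ^ j ∧ Disjoint L.toFinset (U ∪ V) ∧
      I ∈ buildBucket m n d' j L U V := by
  induction j generalizing U V with
  | zero =>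
    obtain ⟨x, hx⟩ := card_pos.1 (by simpa using hin)
    rw [mem_sdiff] at hx
    refine ⟨[x], List.nodup_singleton x, rfl, ?_, ?_⟩
    · simpa using ⟨hx.2, fun h => disjoint_left.1 hV h hx.1⟩
    · simp [buildBucket, hI, hU, hx.1, hV, insert_subset_iff]
  | succ j ih =>
    rw [pow_succ] at hin hout
    obtain ⟨A, hA, hAcard⟩ := exists_subset_card_eq (show 18 * 20 ^ j ≤ #(dset I \ U) by omega)
    obtain ⟨B, hB, hBcard⟩ := exists_subset_card_eq (show 20 ^ j ≤ #((dset I)ᶜ \ V) by omega)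
    obtain ⟨hAD, hAU⟩ := subset_sdiff.1 hA
    obtain ⟨hBD, hBV⟩ := subset_sdiff.1 hB
    rw [subset_compl_iff_disjoint_right] at hBD
    obtain ⟨L₀, hnd, hlen, hdisj, hmem⟩ := ih (U := U ∪ A) (V := V ∪ B)
      (union_subset hU hAD) (disjoint_union_left.2 ⟨hV, hBD⟩)
      (by rw [show dset I \ (U ∪ A) = (dset I \ U) \ A from sdiff_sdiff_left.symm,
        card_sdiff_of_subset hA]; omega)
      (by rw [show (dset I)ᶜ \ (V ∪ B) = ((dset I)ᶜ \ V) \ B from sdiff_sdiff_left.symm,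
        card_sdiff_of_subset hB]; omega)
    have hBA : Disjoint B A := hBD.mono_right hAD
    have hBAUV : Disjoint (B ∪ A) (U ∪ V) := disjoint_union_left.2
      ⟨disjoint_union_right.2 ⟨hBD.mono_right hU, hBV⟩,
        disjoint_union_right.2 ⟨hAU, (hV.mono_right hAD).symm⟩⟩
    refine ⟨L₀ ++ (B.toList ++ A.toList), ?_, ?_, ?_,
      mem_buildBucket_succ_append hlen hBcard hmem⟩
    · refine hnd.append (B.nodup_toList.append A.nodup_toList ?_) ?_ <;>
        rw [← List.disjoint_toFinset_iff_disjoint]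
      · simpa using hBA
      · rw [List.toFinset_append, toList_toFinset, toList_toFinset]
        exact hdisj.mono_right (union_subset (subset_union_right.trans subset_union_right)
          (subset_union_right.trans subset_union_left))
    · simp [hlen, hAcard, hBcard, pow_succ]; ring
    · simpa [← union_assoc] using
        disjoint_union_left.2 ⟨hdisj.mono_right (union_subset_union subset_union_left
          subset_union_left), hBAUV⟩

end Construction

section Bucket

variable {m n d' j : ℕ}

lemma comp_mem_bucketOf_comp_iff (σ : Equiv.Perm (Fin m)) (L : Fin (20 ^ j) → Fin m)
    (I : Fin n → Fin m) : σ ∘ I ∈ bucketOf m n d' j (σ ∘ L) ↔ I ∈ bucketOf m n d' j L := by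
  simpa [bucketOf, ← List.map_ofFn] using comp_mem_buildBucket_map_iff σ j (List.ofFn L) ∅ ∅ I

lemma card_bucketOf_eq {L L' : Fin (20 ^ j) → Fin m} (hL : Injective L) (hL' : Injective L') :
    #(bucketOf m n d' j L) = #(bucketOf m n d' j L') := by
  obtain ⟨σ, hσ⟩ := Equiv.Perm.exists_extending_pair L L' hL hL'
  obtain rfl : σ ∘ L = L' := funext hσ
  exact card_equiv ((Equiv.refl _).arrowCongr σ) fun I =>
    (comp_mem_bucketOf_comp_iff σ L I).symm

lemma card_filter_mem_bucketOf_eq {I I' : Fin n → Fin m} (h : dcount I = dcount I') :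
    #{L : Fin (20 ^ j) → Fin m | Injective L ∧ I ∈ bucketOf m n d' j L} =
      #{L : Fin (20 ^ j) → Fin m | Injective L ∧ I' ∈ bucketOf m n d' j L} := by
  obtain ⟨σ, hσ⟩ := Equiv.Perm.exists_map_finset_eq (dset I) (dset I') h
  have hdset : dset (σ ∘ I) = dset I' := by rw [dset_comp, ← hσ, map_eq_image]; rfl
  refine card_equiv ((Equiv.refl _).arrowCongr σ) fun L => ?_
  rw [mem_filter_univ, mem_filter_univ]
  change _ ↔ Injective (σ ∘ L) ∧ I' ∈ bucketOf m n d' j (σ ∘ L)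
  rw [σ.injective.of_comp_iff, ← comp_mem_bucketOf_comp_iff σ L I]
  exact and_congr_right' (mem_buildBucket_congr hdset ..)

lemma exists_injective_mem_bucketOf {I : Fin n → Fin m} (hI : dcount I = d')
    (hlow : 20 ^ j ≤ d') (hhigh : 20 ^ j + d' ≤ m) :
    ∃ L : Fin (20 ^ j) → Fin m, Injective L ∧ I ∈ bucketOf m n d' j L := by
  obtain ⟨L, hnd, hlen, -, hmem⟩ := exists_mem_buildBucket hI j (empty_subset _)
    (disjoint_empty_left _) (by simpa [← dcount_eq_card_dset, hI])
    (by simp [card_compl, ← dcount_eq_card_dset, hI]; omega)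
  obtain ⟨f, rfl⟩ : ∃ f : Fin (20 ^ j) → Fin m, List.ofFn f = L :=
    hlen ▸ ⟨L.get, List.ofFn_get L⟩
  exact ⟨f, List.nodup_ofFn.1 hnd, hmem⟩

end Bucket

theorem bucket_symmetry_general (m n j d' : ℕ)
    (hj1 : (20 : ℝ) ^ j ≤ (0.01 : ℝ) * m)
    (hd1 : (0.01 : ℝ) * m ≤ (d' : ℝ)) (hd2 : (d' : ℝ) ≤ (0.9 : ℝ) * m) :
    ∃ K M : ℕ,
      (∀ L : Fin (20 ^ j) → Fin m, Function.Injective L → (bucketOf m n d' j L).card = M) ∧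
      (∀ I : Fin n → Fin m, dcount I = d' →
        (Finset.univ.filter fun L : Fin (20 ^ j) → Fin m =>
          Function.Injective L ∧ I ∈ bucketOf m n d' j L).card = K) ∧
      (∀ I : Fin n → Fin m, dcount I = d' →
        (((Finset.univ.filter fun L : Fin (20 ^ j) → Fin m =>
            Function.Injective L).card : ℝ))⁻¹ *
          ∑ L ∈ Finset.univ.filter (fun L : Fin (20 ^ j) → Fin m => Function.Injective L),
            (if I ∈ bucketOf m n d' j L then (((bucketOf m n d' j L).card : ℝ))⁻¹ else 0)
        = (((Finset.univ.filter fun I' : Fin n → Fin m => dcount I' = d').card : ℝ))⁻¹) := by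
  have hlow : 20 ^ j ≤ d' := by exact_mod_cast hj1.trans hd1
  have hhigh : 20 ^ j + d' ≤ m := by
    have : ((20 ^ j + d' : ℕ) : ℝ) ≤ m := by push_cast; linarith
    exact_mod_cast this
  obtain ⟨M, hM⟩ := exists_forall_eq_of_forall_eq fun L L' hL hL' =>
    card_bucketOf_eq (n := n) (d' := d') hL hL'
  obtain ⟨K, hK⟩ := exists_forall_eq_of_forall_eq fun I I' (hI : dcount I = d') hI' =>
    card_filter_mem_bucketOf_eq (j := j) (d' := d') (hI.trans hI'.symm)
  refine ⟨K, M, hM, hK, fun I hI => ?_⟩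
  obtain ⟨L, hL, hIL⟩ := exists_injective_mem_bucketOf hI hlow hhigh
  apply inv_card_mul_sum_ite_inv_card_of_biregular (M := M) (K := K)
  · exact fun L _ I' hI' => mem_filter_univ _ |>.2 (dcount_eq_of_mem_buildBucket hI')
  · exact fun L hL => hM L (mem_filter_univ _ |>.1 hL)
  · intro I' hI'
    rw [filter_filter]
    exact hK I' (mem_filter_univ I' |>.1 hI')
  · exact hK I hI ▸ card_pos.2 ⟨L, mem_filter_univ _ |>.2 ⟨hL, hIL⟩⟩
  · exact mem_filter_univ _ |>.2 hI

/-- for fixed `m, n, d'` in the stated ranges, every `I ∈ [m]^n` with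
`|D(I)| = d'` lies in the same number `K` of buckets `𝒞_{d',L}`, every bucket has the
same cardinality `M`, and consequently drawing a uniform list `L` of `ℓ = 20^j` distinct
indices and then a uniform `I ∈ 𝒞_{d',L}` yields a uniform `I` on
`{I ∈ [m]^n : |D(I)| = d'}`. -/
theorem bucket_symmetry (m n j d' : ℕ) (hm : 0 < m) (hn0 : 0 < n)
    (hn1 : (0.02 : ℝ) * m ≤ (n : ℝ)) (hn2 : n ≤ m)
    (hj1 : (20 : ℝ) ^ j ≤ (0.01 : ℝ) * m) (hj2 : (0.01 : ℝ) * m < (20 : ℝ) ^ (j + 1))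
    (hd1 : (0.01 : ℝ) * m ≤ (d' : ℝ)) (hd2 : (d' : ℝ) ≤ (0.9 : ℝ) * m) :
    ∃ K M : ℕ,
      (∀ L : Fin (20 ^ j) → Fin m, Function.Injective L → (bucketOf m n d' j L).card = M) ∧
      (∀ I : Fin n → Fin m, dcount I = d' →
        (Finset.univ.filter fun L : Fin (20 ^ j) → Fin m =>
          Function.Injective L ∧ I ∈ bucketOf m n d' j L).card = K) ∧
      (∀ I : Fin n → Fin m, dcount I = d' →
        (((Finset.univ.filter fun L : Fin (20 ^ j) → Fin m =>
            Function.Injective L).card : ℝ))⁻¹ *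
          ∑ L ∈ Finset.univ.filter (fun L : Fin (20 ^ j) → Fin m => Function.Injective L),
            (if I ∈ bucketOf m n d' j L then (((bucketOf m n d' j L).card : ℝ))⁻¹ else 0)
        = (((Finset.univ.filter fun I' : Fin n → Fin m => dcount I' = d').card : ℝ))⁻¹) :=
  bucket_symmetry_general m n j d' hj1 hd1 hd2
end
end
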